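/- Let I be an ideal on ℕ, S nonempty, and B = (B_i)_{i∈S} a family of non-negative matrices with sup{Σ_k b_{nk}^{(i)} : n ∈ ℕ, i ∈ S} < ∞ and Σ_k b_{nk}^{(i)} → 1 along I uniformly in i ∈ S. Then a real number a is a J_{B,I}-cluster point of the sequence s = (s_n) if and only if for every ε > 0, I-liminf inf_{i∈S} Σ_k b_{nk}^{(i)} χ_{D(s,a,ε)}(k) < 1, where D(s,a,ε) = {k : |s_k − a| ≥ ε}. -/

import Mathlib

/-- An ideal on ℕ: nonempty collection of subsets, not containing ℕ,
closed under subsets and finite unions. -/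
def IsIdeal (I : Set (Set ℕ)) : Prop :=
  I.Nonempty ∧ Set.univ ∉ I ∧ (∀ A ∈ I, ∀ B, B ⊆ A → B ∈ I) ∧ ∀ A ∈ I, ∀ B ∈ I, A ∪ B ∈ I

/-- Convergence of `g n i` to `g0 i` along the ideal `I`, uniformly in `i ∈ S`. -/
def UnifConvAlong {S : Type*} (I : Set (Set ℕ)) (g : ℕ → S → ℝ) (g0 : S → ℝ) : Prop :=
  ∀ ε > 0, ∃ E ∈ I, ∀ i : S, {n : ℕ | ε ≤ |g n i - g0 i|} ⊆ E

/-- The collection `J_{B,I}` of sets `K ⊆ ℕ` whose matrix transforms tend to 0 along `I`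
uniformly in `i ∈ S`. -/
def matIdeal {S : Type*} (I : Set (Set ℕ)) (b : S → ℕ → ℕ → ℝ) : Set (Set ℕ) :=
  {K : Set ℕ | UnifConvAlong I (fun n i => ∑' k, b i n k * K.indicator 1 k) (fun _ => 0)}

/-- `I`-limit superior of a real sequence. -/
noncomputable def idealLimSup (I : Set (Set ℕ)) (s : ℕ → ℝ) : ℝ :=
  sSup {t : ℝ | {n : ℕ | t < s n} ∉ I}

/-- `I`-limit inferior of a real sequence. -/
noncomputable def idealLimInf (I : Set (Set ℕ)) (s : ℕ → ℝ) : ℝ :=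
  sInf {t : ℝ | {n : ℕ | s n < t} ∉ I}

/-- `I`-convergence of a real sequence to `a`. -/
def IdealConv (I : Set (Set ℕ)) (s : ℕ → ℝ) (a : ℝ) : Prop :=
  ∀ ε > 0, {n : ℕ | ε ≤ |s n - a|} ∈ I

/-- `B^I`-statistical convergence of `s` to `a`. -/
def BStatConv {S : Type*} (I : Set (Set ℕ)) (b : S → ℕ → ℕ → ℝ) (s : ℕ → ℝ) (a : ℝ) : Prop :=
  ∀ ε > 0, UnifConvAlong I
    (fun n i => ∑' k, b i n k * Set.indicator {k : ℕ | ε ≤ |s k - a|} 1 k) (fun _ => 0)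

/-!
Write `T_K(n, i) = Σ_k b^{(i)}_{nk} χ_K(k)`. Once the row sums are close to `1` (which happens
off a set of `I`), the rows are summable and `T_C + T_D` is close to `1`, where
`C = {k : |s_k - a| < ε}` and `D = Cᶜ`. So `T_C` fails to tend to `0` uniformly along `I` exactly
when `inf_i T_D(n, i)` stays below `1 - δ` on a set of `n` not in `I`, i.e. when the `I`-liminf
of `inf_i T_D` is below `1`. The equivalence holds for each `ε` separately.
-/

open Set

namespace IsIdeal

variable {I : Set (Set ℕ)}

theorem empty_mem (hI : IsIdeal I) : (∅ : Set ℕ) ∈ I := by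
  obtain ⟨A, hA⟩ := hI.1
  exact hI.2.2.1 A hA ∅ (empty_subset A)

theorem union_mem (hI : IsIdeal I) {A B : Set ℕ} (hA : A ∈ I) (hB : B ∈ I) : A ∪ B ∈ I :=
  hI.2.2.2 A hA B hB

theorem mem_of_subset (hI : IsIdeal I) {A B : Set ℕ} (hA : A ∈ I) (hBA : B ⊆ A) : B ∈ I :=
  hI.2.2.1 A hA B hBA

theorem notMem_of_compl_subset (hI : IsIdeal I) {A E : Set ℕ} (hE : E ∈ I) (hEA : Eᶜ ⊆ A) :
    A ∉ I := fun hA =>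
  hI.2.1 <| hI.mem_of_subset (hI.union_mem hA hE) fun n _ => by
    by_cases hn : n ∈ E
    · exact Or.inr hn
    · exact Or.inl (hEA hn)

end IsIdeal

section UnifConvAlong

variable {S : Type*} {I : Set (Set ℕ)} {g g' : ℕ → S → ℝ} {g0 : S → ℝ}

theorem UnifConvAlong.exists_abs_sub_lt (h : UnifConvAlong I g g0) {ε : ℝ} (hε : 0 < ε) :
    ∃ E ∈ I, ∀ n ∉ E, ∀ i, |g n i - g0 i| < ε := by
  obtain ⟨E, hE, hsub⟩ := h ε hε
  exact ⟨E, hE, fun n hn i => lt_of_not_ge fun hle => hn (hsub i hle)⟩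

theorem UnifConvAlong.congr_of_eq_off (hI : IsIdeal I) (h : UnifConvAlong I g g0)
    {E : Set ℕ} (hE : E ∈ I) (heq : ∀ n ∉ E, ∀ i, g n i = g' n i) :
    UnifConvAlong I g' g0 := by
  intro ε hε
  obtain ⟨F, hF, hsub⟩ := h ε hε
  refine ⟨F ∪ E, hI.union_mem hF hE, fun i n hn => ?_⟩
  by_cases hnE : n ∈ E
  · exact Or.inr hnE
  · refine Or.inl (hsub i ?_)
    simpa only [mem_ofPred_eq, heq n hnE i] using hn

end UnifConvAlong

section IdealLimInf

variable {I : Set (Set ℕ)} {f : ℕ → ℝ}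

theorem bddBelow_setOf_notMem_lt (hI : IsIdeal I) (hf : BddBelow (range f)) :
    BddBelow {t : ℝ | {n : ℕ | f n < t} ∉ I} := by
  obtain ⟨m, hm⟩ := hf
  refine ⟨m, fun t ht => le_of_not_gt fun htm => ht ?_⟩
  convert hI.empty_mem
  exact eq_empty_of_forall_notMem fun n hn => (hm ⟨n, rfl⟩).not_gt (hn.trans htm)

theorem idealLimInf_lt_iff (hI : IsIdeal I) (hf : BddBelow (range f))
    (hne : ∃ t, {n : ℕ | f n < t} ∉ I) {c : ℝ} :
    idealLimInf I f < c ↔ ∃ t < c, {n : ℕ | f n < t} ∉ I := by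
  rw [idealLimInf, csInf_lt_iff (bddBelow_setOf_notMem_lt hI hf) hne]
  exact ⟨fun ⟨t, ht, htc⟩ => ⟨t, htc, ht⟩, fun ⟨t, htc, ht⟩ => ⟨t, ht, htc⟩⟩

end IdealLimInf

theorem ciInf_le_of_nonneg {ι : Type*} {f : ι → ℝ} (hf : ∀ i, 0 ≤ f i) (i : ι) :
    ⨅ j, f j ≤ f i :=
  ciInf_le ⟨0, by rintro _ ⟨j, rfl⟩; exact hf j⟩ i

theorem bddBelow_range_iInf_of_nonneg {ι : Type*} {h : ℕ → ι → ℝ} (hh : ∀ n i, 0 ≤ h n i) :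
    BddBelow (range fun n => ⨅ i, h n i) :=
  ⟨0, by rintro _ ⟨n, rfl⟩; exact Real.iInf_nonneg (hh n)⟩

section TwoSummands

variable {S : Type*} {I : Set (Set ℕ)} {g h : ℕ → S → ℝ}

theorem idealLimInf_iInf_lt_one_of_not_unifConvAlong (hI : IsIdeal I)
    (hg : ∀ n i, 0 ≤ g n i) (hh : ∀ n i, 0 ≤ h n i)
    (hgh : UnifConvAlong I (fun n i => g n i + h n i) fun _ => 1)
    (hnot : ¬UnifConvAlong I g fun _ => 0) :
    idealLimInf I (fun n => ⨅ i, h n i) < 1 := by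
  obtain ⟨δ, hδ, hfail⟩ : ∃ δ > 0, ∀ E ∈ I, ∃ i, ¬{n | δ ≤ |g n i - 0|} ⊆ E := by
    simpa only [UnifConvAlong, not_forall, not_exists, not_and, exists_prop] using hnot
  obtain ⟨E, hE, hgh1⟩ := hgh.exists_abs_sub_lt (half_pos hδ)
  have hlow : {n | ⨅ i, h n i < 1 - δ / 2} ∉ I := fun hA => by
    obtain ⟨i, hi⟩ := hfail _ (hI.union_mem hA hE)
    obtain ⟨n, hgn, hn⟩ := not_subset.mp hi
    rw [mem_union, not_or] at hn
    rw [mem_ofPred_eq, sub_zero, abs_of_nonneg (hg n i)] at hgn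
    have hsum := (abs_lt.mp (hgh1 n hn.2 i)).2
    exact hn.1 <| (ciInf_le_of_nonneg (hh n) i).trans_lt (by linarith)
  have hne : ∃ t, {n | ⨅ i, h n i < t} ∉ I := ⟨_, hlow⟩
  exact (idealLimInf_lt_iff hI (bddBelow_range_iInf_of_nonneg hh) hne).mpr
    ⟨1 - δ / 2, by linarith, hlow⟩

theorem not_unifConvAlong_of_idealLimInf_iInf_lt_one [Nonempty S] (hI : IsIdeal I)
    (hg : ∀ n i, 0 ≤ g n i) (hh : ∀ n i, 0 ≤ h n i)
    (hgh : UnifConvAlong I (fun n i => g n i + h n i) fun _ => 1)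
    (hlt : idealLimInf I (fun n => ⨅ i, h n i) < 1) :
    ¬UnifConvAlong I g fun _ => 0 := by
  intro hconv
  -- Needed since `sInf ∅ = 0`: off a set of `I` we have `g + h < 2`, hence `inf_i h < 2`.
  have hne : ∃ t, {n | ⨅ i, h n i < t} ∉ I := by
    obtain ⟨E, hE, hE1⟩ := hgh.exists_abs_sub_lt one_pos
    refine ⟨2, hI.notMem_of_compl_subset hE fun n hn => ?_⟩
    obtain ⟨i⟩ := ‹Nonempty S›
    have := (abs_lt.mp (hE1 n hn i)).2
    exact (ciInf_le_of_nonneg (hh n) i).trans_lt (by linarith [hg n i])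
  obtain ⟨t, ht1, ht⟩ :=
    (idealLimInf_lt_iff hI (bddBelow_range_iInf_of_nonneg hh) hne).mp hlt
  obtain ⟨E, hE, hgh1⟩ := hgh.exists_abs_sub_lt (half_pos (sub_pos.mpr ht1))
  obtain ⟨F, hF, hg0⟩ := hconv.exists_abs_sub_lt (half_pos (sub_pos.mpr ht1))
  refine ht (hI.mem_of_subset (hI.union_mem hE hF) fun n hn => ?_)
  by_contra hEF
  rw [mem_union, not_or] at hEF
  refine (le_ciInf fun i => ?_).not_gt (show ⨅ i, h n i < t from hn)
  have hsum := (abs_lt.mp (hgh1 n hEF.1 i)).1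
  have hgn := (abs_lt.mp (hg0 n hEF.2 i)).2
  linarith

theorem not_unifConvAlong_zero_iff_idealLimInf_iInf_lt_one [Nonempty S] (hI : IsIdeal I)
    (hg : ∀ n i, 0 ≤ g n i) (hh : ∀ n i, 0 ≤ h n i)
    (hgh : UnifConvAlong I (fun n i => g n i + h n i) fun _ => 1) :
    (¬UnifConvAlong I g fun _ => 0) ↔ idealLimInf I (fun n => ⨅ i, h n i) < 1 :=
  ⟨idealLimInf_iInf_lt_one_of_not_unifConvAlong hI hg hh hgh,
    not_unifConvAlong_of_idealLimInf_iInf_lt_one hI hg hh hgh⟩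

end TwoSummands

theorem tsum_mul_indicator_add_tsum_mul_indicator_compl {β : Type*} {u : β → ℝ}
    (hu : Summable u) (K : Set β) :
    ∑' k, u k * K.indicator 1 k + ∑' k, u k * Kᶜ.indicator 1 k = ∑' k, u k := by
  simp only [← indicator_mul_right, Pi.one_apply, mul_one]
  rw [← (hu.indicator K).tsum_add (hu.indicator Kᶜ)]
  exact tsum_congr (indicator_self_add_compl_apply K u)

theorem summable_of_tsum_ne_zero {α β : Type*} [AddCommMonoid α] [TopologicalSpace α]
    {u : β → α} (hu : ∑' k, u k ≠ 0) : Summable u := by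
  by_contra hns
  exact hu (tsum_eq_zero_of_not_summable hns)

theorem unifConvAlong_tsum_mul_indicator_add_compl {S : Type*} {I : Set (Set ℕ)} (hI : IsIdeal I)
    {b : S → ℕ → ℕ → ℝ} (h1 : UnifConvAlong I (fun n i => ∑' k, b i n k) fun _ => 1)
    (K : Set ℕ) :
    UnifConvAlong I
      (fun n i => ∑' k, b i n k * K.indicator 1 k + ∑' k, b i n k * Kᶜ.indicator 1 k)
      fun _ => 1 := by
  obtain ⟨E, hE, hE1⟩ := h1.exists_abs_sub_lt one_pos
  refine h1.congr_of_eq_off hI hE fun n hn i => ?_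
  have hpos : 0 < ∑' k, b i n k := by linarith [(abs_lt.mp (hE1 n hn i)).1]
  exact (tsum_mul_indicator_add_tsum_mul_indicator_compl (summable_of_tsum_ne_zero hpos.ne') K).symm

theorem stmt10_general {S : Type*} [Nonempty S] (I : Set (Set ℕ)) (hI : IsIdeal I)
    (b : S → ℕ → ℕ → ℝ) (hb : ∀ i n k, 0 ≤ b i n k)
    (h1 : UnifConvAlong I (fun n i => ∑' k, b i n k) (fun _ => 1))
    (s : ℕ → ℝ) (a : ℝ) :
    (∀ ε > (0 : ℝ), {n : ℕ | |s n - a| < ε} ∉ matIdeal I b) ↔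
      ∀ ε > (0 : ℝ),
        idealLimInf I
          (fun n => ⨅ i : S, ∑' k, b i n k * Set.indicator {k : ℕ | ε ≤ |s k - a|} 1 k) < 1 := by
  have hnonneg (K : Set ℕ) n i : 0 ≤ ∑' k, b i n k * K.indicator 1 k :=
    tsum_nonneg fun k => mul_nonneg (hb i n k) (indicator_nonneg (fun _ _ => zero_le_one) k)
  refine forall₂_congr fun ε _ => ?_
  have hD : {n : ℕ | |s n - a| < ε}ᶜ = {k : ℕ | ε ≤ |s k - a|} := by
    ext k
    simp only [mem_compl_iff, mem_ofPred_eq, not_lt]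
  have key := not_unifConvAlong_zero_iff_idealLimInf_iInf_lt_one hI (hnonneg _) (hnonneg _)
    (unifConvAlong_tsum_mul_indicator_add_compl hI h1 {n : ℕ | |s n - a| < ε})
  rwa [hD] at key

/-- Characterisation of `J_{B,I}`-cluster points. -/
theorem stmt10 {S : Type*} [Nonempty S] (I : Set (Set ℕ)) (hI : IsIdeal I)
    (b : S → ℕ → ℕ → ℝ) (hb : ∀ i n k, 0 ≤ b i n k)
    (hplus : ∃ i0 : S, 0 < ⨅ n : ℕ, ∑' k, b i0 n k)
    (hsup : ∃ M : ℝ, ∀ (n : ℕ) (i : S), ∑' k, b i n k ≤ M)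
    (h1 : UnifConvAlong I (fun n i => ∑' k, b i n k) (fun _ => 1))
    (s : ℕ → ℝ) (a : ℝ) :
    (∀ ε > (0 : ℝ), {n : ℕ | |s n - a| < ε} ∉ matIdeal I b) ↔
      ∀ ε > (0 : ℝ),
        idealLimInf I
          (fun n => ⨅ i : S, ∑' k, b i n k * Set.indicator {k : ℕ | ε ≤ |s k - a|} 1 k) < 1 :=
  stmt10_general I hI b hb h1 s a
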